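/- Let n = 2k+1 be odd with n ≥ 3, let A be the Cartan matrix of type C_n, and let σ be any permutation of {1,…,n}. Then the kernel of B_σ over ℚ is spanned by a single nonzero vector v whose support {i : v_i ≠ 0} is exactly the set of odd indices {1, 3, …, n}; in particular the support of v has exactly k+1 connected components in the Dynkin diagram of type C_n (a path on {1,…,n}). -/

import Mathlib

open Matrix

/-- The Cartan matrix of type `Cₙ` (nodes indexed `0, …, n-1`; the long root is the last
node): `a i i = 2`, consecutive nodes give `-1`, except `a (n-1) (n-2) = -2`. -/
def cartanC (n : ℕ) : Matrix (Fin n) (Fin n) ℚ :=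
  fun i j => if i = j then 2
    else if i.val + 1 = j.val then -1
    else if j.val + 1 = i.val then (if i.val = n - 1 then -2 else -1) else 0

/-- The acyclic exchange matrix `B_σ` attached to a Cartan matrix `A` and a permutation `σ`:
`b i i = 0`, `b i j = -a i j` if `σ i < σ j`, and `b i j = a i j` if `σ i > σ j`. -/
def Bmat {n : ℕ} (A : Matrix (Fin n) (Fin n) ℚ) (σ : Equiv.Perm (Fin n)) :
    Matrix (Fin n) (Fin n) ℚ :=
  fun i j => if i = j then 0 else if σ i < σ j then -A i j else A i j

/-!
With `d = (2, …, 2, 1)`, `diagonal d * B_σ` is skew-symmetric, so for odd `n` the matrix `B_σ` is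
singular. Moreover `B_σ` is nonzero exactly on the edges of the path `0 — 1 — ⋯ — n-1`, so for a
kernel vector `v` row `0` gives `v 1 = 0` and row `m + 1` links `v (m + 2)` to `v m` by a nonzero
factor. Hence `v` vanishes at odd indices, and at even ones exactly when `v 0 = 0`; so the kernel
is the line through any nonzero kernel vector. Its support, the even indices (the odd nodes
`1, 3, …, n` in the paper's 1-based numbering), is an independent set of the path, so each of
its `k + 1` nodes is a component on its own.
-/

open SimpleGraph

theorem Matrix.det_eq_zero_of_transpose_eq_neg {ι R : Type*} [Fintype ι] [DecidableEq ι]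
    [CommRing R] [NoZeroDivisors R] [CharZero R] (hι : Odd (Fintype.card ι))
    {S : Matrix ι ι R} (hS : Sᵀ = -S) : S.det = 0 := by
  have h := congrArg det hS
  rw [det_transpose, det_neg, hι.neg_one_pow, neg_one_mul] at h
  exact CharZero.eq_neg_self_iff.mp h

section Bmat

variable {n : ℕ} (A : Matrix (Fin n) (Fin n) ℚ) (σ : Equiv.Perm (Fin n))

theorem Bmat_ne_zero_iff {i j : Fin n} : Bmat A σ i j ≠ 0 ↔ i ≠ j ∧ A i j ≠ 0 := by
  unfold Bmat; split_ifs <;> simp_all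

theorem transpose_diagonal_mul_Bmat {d : Fin n → ℚ} (hd : ∀ i j, d i * A i j = d j * A j i) :
    (diagonal d * Bmat A σ)ᵀ = -(diagonal d * Bmat A σ) := by
  ext i j
  simp only [transpose_apply, Matrix.neg_apply, diagonal_mul, Bmat]
  rcases eq_or_ne i j with rfl | hij
  · simp
  rcases lt_or_gt_of_ne (σ.injective.ne hij) with h | h
  · simp [hij, hij.symm, h, h.not_gt, hd i j]
  · simp [hij, hij.symm, h, h.not_gt, hd j i]

theorem det_Bmat_eq_zero_of_symmetrizable (hn : Odd n) {d : Fin n → ℚ} (hd0 : ∀ i, d i ≠ 0)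
    (hd : ∀ i j, d i * A i j = d j * A j i) : (Bmat A σ).det = 0 := by
  have hS := det_eq_zero_of_transpose_eq_neg (by simpa using hn)
    (transpose_diagonal_mul_Bmat A σ hd)
  rw [det_mul, det_diagonal] at hS
  exact (mul_eq_zero.mp hS).resolve_left (Finset.prod_ne_zero_iff.mpr fun i _ => hd0 i)

end Bmat

theorem cartanC_symmetrizable (n : ℕ) (i j : Fin n) :
    (if i.val + 1 = n then 1 else 2) * cartanC n i j =
      (if j.val + 1 = n then 1 else 2) * cartanC n j i := by
  have := i.isLt
  simp only [cartanC, Fin.ext_iff]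
  split_ifs <;> first | omega | norm_num

theorem cartanC_ne_zero_iff {n : ℕ} {i j : Fin n} (hij : i ≠ j) :
    cartanC n i j ≠ 0 ↔ (pathGraph n).Adj i j := by
  rw [pathGraph_adj]
  simp only [cartanC, if_neg hij]
  split_ifs <;> norm_num <;> omega

theorem Bmat_cartanC_ne_zero_iff {n : ℕ} (σ : Equiv.Perm (Fin n)) (i j : Fin n) :
    Bmat (cartanC n) σ i j ≠ 0 ↔ (pathGraph n).Adj i j := by
  rw [Bmat_ne_zero_iff]
  exact ⟨fun h => (cartanC_ne_zero_iff h.1).mp h.2,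
    fun h => ⟨h.ne, (cartanC_ne_zero_iff h.ne).mpr h⟩⟩

section PathSupport

variable {K : Type*} [Field K] {n : ℕ} {M : Matrix (Fin n) (Fin n) K}

theorem mulVec_apply_zero_of_pathGraph_support (hM : ∀ i j, M i j ≠ 0 → (pathGraph n).Adj i j)
    (w : Fin n → K) (h : 1 < n) :
    (M *ᵥ w) ⟨0, by omega⟩ = M ⟨0, by omega⟩ ⟨1, h⟩ * w ⟨1, h⟩ := by
  refine Finset.sum_eq_single (⟨1, h⟩ : Fin n) (fun c _ hc => ?_)
    (fun h => absurd (Finset.mem_univ _) h)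
  have hc' : c.val ≠ 1 := fun e => hc (Fin.ext e)
  by_contra hne
  have := pathGraph_adj.mp (hM _ _ (left_ne_zero_of_mul hne))
  simp only at this
  omega

theorem mulVec_apply_succ_of_pathGraph_support (hM : ∀ i j, M i j ≠ 0 → (pathGraph n).Adj i j)
    (w : Fin n → K) {m : ℕ} (h : m + 2 < n) :
    (M *ᵥ w) ⟨m + 1, by omega⟩ = M ⟨m + 1, by omega⟩ ⟨m, by omega⟩ * w ⟨m, by omega⟩ +
      M ⟨m + 1, by omega⟩ ⟨m + 2, h⟩ * w ⟨m + 2, h⟩ := by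
  refine Finset.sum_eq_add_of_mem (⟨m, by omega⟩ : Fin n) ⟨m + 2, h⟩ (Finset.mem_univ _)
    (Finset.mem_univ _) (Fin.ne_of_val_ne (by simp)) fun c _ hc => ?_
  have hc1 : c.val ≠ m := fun e => hc.1 (Fin.ext e)
  have hc2 : c.val ≠ m + 2 := fun e => hc.2 (Fin.ext e)
  by_contra hne
  have := pathGraph_adj.mp (hM _ _ (left_ne_zero_of_mul hne))
  simp only at this
  omega

theorem apply_eq_zero_iff_of_mulVec_eq_zero (hM : ∀ i j, M i j ≠ 0 ↔ (pathGraph n).Adj i j)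
    {w : Fin n → K} (hw : M *ᵥ w = 0) (i : Fin n) :
    w i = 0 ↔ i.val % 2 = 1 ∨ w ⟨0, i.pos⟩ = 0 := by
  obtain ⟨m, hm⟩ := i
  induction m using Nat.strong_induction_on with
  | _ m ih =>
    match m with
    | 0 => simp
    | 1 =>
      have h0 := congrFun hw ⟨0, by omega⟩
      rw [mulVec_apply_zero_of_pathGraph_support (fun i j => (hM i j).1) w hm] at h0
      have h01 : M ⟨0, by omega⟩ ⟨1, hm⟩ ≠ 0 := (hM _ _).2 (pathGraph_adj.mpr (by simp))
      simpa [h01] using h0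
    | m + 2 =>
      have hrow := congrFun hw ⟨m + 1, by omega⟩
      rw [mulVec_apply_succ_of_pathGraph_support (fun i j => (hM i j).1) w hm] at hrow
      have hl : M ⟨m + 1, by omega⟩ ⟨m, by omega⟩ ≠ 0 := (hM _ _).2 (pathGraph_adj.mpr (by simp))
      have hr : M ⟨m + 1, by omega⟩ ⟨m + 2, hm⟩ ≠ 0 := (hM _ _).2 (pathGraph_adj.mpr (by simp))
      have hstep : w ⟨m + 2, hm⟩ = 0 ↔ w ⟨m, by omega⟩ = 0 := by
        constructor <;> intro h
        · rw [h, mul_zero, add_zero] at hrow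
          exact (mul_eq_zero.mp hrow).resolve_left hl
        · rw [h, mul_zero, zero_add] at hrow
          exact (mul_eq_zero.mp hrow).resolve_left hr
      rw [hstep, ih m (by omega) (by omega)]
      simp [Nat.add_mod_right]

theorem apply_zero_ne_zero_of_mulVec_eq_zero (hM : ∀ i j, M i j ≠ 0 ↔ (pathGraph n).Adj i j)
    {v : Fin n → K} (hv : M *ᵥ v = 0) (hv0 : v ≠ 0) (hn : 0 < n) : v ⟨0, hn⟩ ≠ 0 := fun h0 =>
  hv0 (funext fun i => (apply_eq_zero_iff_of_mulVec_eq_zero hM hv i).2 (Or.inr h0))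

theorem apply_ne_zero_iff_of_mulVec_eq_zero (hM : ∀ i j, M i j ≠ 0 ↔ (pathGraph n).Adj i j)
    {v : Fin n → K} (hv : M *ᵥ v = 0) (hv0 : v ≠ 0) (i : Fin n) : v i ≠ 0 ↔ i.val % 2 = 0 := by
  rw [Ne, apply_eq_zero_iff_of_mulVec_eq_zero hM hv i]
  simp only [apply_zero_ne_zero_of_mulVec_eq_zero hM hv hv0 i.pos, or_false]
  omega

theorem ker_toLin'_eq_span_of_mulVec_eq_zero (hM : ∀ i j, M i j ≠ 0 ↔ (pathGraph n).Adj i j)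
    {v : Fin n → K} (hv : M *ᵥ v = 0) (hv0 : v ≠ 0) :
    LinearMap.ker (toLin' M) = Submodule.span K {v} := by
  refine le_antisymm (fun w hw => ?_)
    ((Submodule.span_singleton_le_iff_mem _ _).2 (by rwa [LinearMap.mem_ker, toLin'_apply]))
  obtain ⟨i, -⟩ := Function.ne_iff.mp hv0
  set c := w ⟨0, i.pos⟩ / v ⟨0, i.pos⟩
  have hu : M *ᵥ (w - c • v) = 0 := by
    rw [mulVec_sub, mulVec_smul, hv, smul_zero, sub_zero]
    exact hw
  have hu0 : (w - c • v) ⟨0, i.pos⟩ = 0 := by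
    simp [c, apply_zero_ne_zero_of_mulVec_eq_zero hM hv hv0 i.pos]
  have hwc : w - c • v = 0 :=
    funext fun j => (apply_eq_zero_iff_of_mulVec_eq_zero hM hu j).2 (Or.inr hu0)
  exact Submodule.mem_span_singleton.2 ⟨c, (sub_eq_zero.mp hwc).symm⟩

end PathSupport

theorem SimpleGraph.card_connectedComponent_bot (V : Type*) :
    Nat.card (⊥ : SimpleGraph V).ConnectedComponent = Nat.card V := by
  refine (Nat.card_congr (Equiv.ofBijective _ ⟨fun u v huv => ?_, fun c => c.exists_rep⟩)).symm
  exact reachable_bot.mp (ConnectedComponent.exact huv)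

theorem pathGraph_induce_even_eq_bot (n : ℕ) :
    (pathGraph n).induce {i : Fin n | i.val % 2 = 0} = ⊥ := by
  ext ⟨a, ha⟩ ⟨b, hb⟩
  simp only [Set.mem_ofPred_eq] at ha hb
  simp only [comap_adj, Function.Embedding.coe_subtype, pathGraph_adj, bot_adj, iff_false]
  omega

theorem card_even_fin_two_mul_add_one (k : ℕ) :
    Nat.card {i : Fin (2 * k + 1) | i.val % 2 = 0} = k + 1 := by
  have hrange : {i : Fin (2 * k + 1) | i.val % 2 = 0} =
      Set.range (fun j : Fin (k + 1) => (⟨2 * j, by omega⟩ : Fin (2 * k + 1))) := by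
    ext i
    simp only [Set.mem_ofPred_eq, Set.mem_range, Fin.ext_iff]
    exact ⟨fun h => ⟨⟨i / 2, by omega⟩, by simp only; omega⟩, fun ⟨j, hj⟩ => by omega⟩
  have hinj : Function.Injective (fun j : Fin (k + 1) => (⟨2 * j, by omega⟩ : Fin (2 * k + 1))) :=
    fun a b h => Fin.ext (by simp only [Fin.mk.injEq] at h; omega)
  rw [hrange, Nat.card_range_of_injective hinj, Nat.card_fin]

theorem det_Bmat_cartanC_eq_zero {n : ℕ} (hn : Odd n) (σ : Equiv.Perm (Fin n)) :
    (Bmat (cartanC n) σ).det = 0 :=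
  det_Bmat_eq_zero_of_symmetrizable _ σ hn (fun i => by split_ifs <;> norm_num)
    (cartanC_symmetrizable n)

theorem kernel_gen_support_typeC_general (k : ℕ) (σ : Equiv.Perm (Fin (2 * k + 1))) :
    ∃ v : Fin (2 * k + 1) → ℚ, v ≠ 0 ∧
      LinearMap.ker (Matrix.toLin' (Bmat (cartanC (2 * k + 1)) σ)) =
        Submodule.span ℚ {v} ∧
      {i : Fin (2 * k + 1) | v i ≠ 0} = {i : Fin (2 * k + 1) | i.val % 2 = 0} ∧
      Nat.card
        ((SimpleGraph.pathGraph (2 * k + 1)).induce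
          {i : Fin (2 * k + 1) | v i ≠ 0}).ConnectedComponent = k + 1 := by
  obtain ⟨v, hv0, hv⟩ :=
    exists_mulVec_eq_zero_iff.mpr (det_Bmat_cartanC_eq_zero (odd_two_mul_add_one k) σ)
  have hsupp : {i | v i ≠ 0} = {i : Fin (2 * k + 1) | i.val % 2 = 0} :=
    Set.ext (apply_ne_zero_iff_of_mulVec_eq_zero (Bmat_cartanC_ne_zero_iff σ) hv hv0)
  refine ⟨v, hv0, ker_toLin'_eq_span_of_mulVec_eq_zero (Bmat_cartanC_ne_zero_iff σ) hv hv0,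
    hsupp, ?_⟩
  rw [hsupp, pathGraph_induce_even_eq_bot, card_connectedComponent_bot,
    card_even_fin_two_mul_add_one]

/-- In type `Cₙ` with `n = 2k+1` odd, `n ≥ 3`, the kernel of any acyclic exchange matrix
`B_σ` is spanned by a single nonzero vector whose support is exactly the set of nodes with
even `0`-indexed index (i.e. the odd nodes `1, 3, …, n` in `1`-indexed notation); in
particular the support has exactly `k+1` connected components in the Dynkin diagram of
type `Cₙ` (the path graph on the `n` nodes). -/
theorem kernel_gen_support_typeC (k : ℕ) (hk : 1 ≤ k) (σ : Equiv.Perm (Fin (2 * k + 1))) :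
    ∃ v : Fin (2 * k + 1) → ℚ, v ≠ 0 ∧
      LinearMap.ker (Matrix.toLin' (Bmat (cartanC (2 * k + 1)) σ)) =
        Submodule.span ℚ {v} ∧
      {i : Fin (2 * k + 1) | v i ≠ 0} = {i : Fin (2 * k + 1) | i.val % 2 = 0} ∧
      Nat.card
        ((SimpleGraph.pathGraph (2 * k + 1)).induce
          {i : Fin (2 * k + 1) | v i ≠ 0}).ConnectedComponent = k + 1 :=
  kernel_gen_support_typeC_general k σ
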